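/- arXiv:1103.2000 — 2 statements merged into one kernel-verified Lean document; each statement's English description precedes it below -/
import Mathlib

section
/- Assume the Markov chain with transition kernel P is m-recurrent for some nonzero σ-finite measure m. Then the stationary measure is unique up to a constant multiplier: if μ₁ and μ₂ are nonzero σ-finite stationary measures for P, then there is a constant c > 0 with μ₁ = c·μ₂. -/
/-!
Recurrence makes the expected number of visits `∑ₙ Pⁿ(x, A)` infinite for every `x` and every
`m`-positive `A`: every tail `∑_{n ≥ k} Pⁿ(x, A) = ∫ ∑ₙ Pⁿ(y, A) Pᵏ(x, dy)` is at least one.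
Hence a nonzero invariant measure charges every `m`-positive set, and an excessive measure
`ν ≥ νP` that is finite on such an `A` is invariant, because its defect `ρ = ν - νP` satisfies
`∫ ∑ₙ Pⁿ(y, A) ρ(dy) ≤ ν A`. For invariant `μ₁`, `μ₂` the infimum `μ₁ ⊓ μ₂` is excessive, hence
invariant, and so are the mutually singular remainders `μᵢ - μ₁ ⊓ μ₂`. They cannot both charge
`m`; once `μ₂` is scaled so that `μ₁ A = μ₂ A`, the other one vanishes on `A`, hence everywhere.
-/

open MeasureTheory ProbabilityTheory
open scoped ENNReal NNReal

noncomputable section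

/-- The hitting time `T_A = inf {n ≥ 1 : ω n ∈ A}`, with value `⊤ : ℕ∞` if no such `n` exists. -/
def hitTime {S : Type*} (A : Set S) (ω : ℕ → S) : ℕ∞ :=
  sInf ((fun k : ℕ => (k : ℕ∞)) '' {k : ℕ | 1 ≤ k ∧ ω k ∈ A})

/-- `IsMarkovPath K μ₀ L` says that `L` is the law on path space `ℕ → E` of the
time-homogeneous Markov chain with transition kernel `K` and initial distribution `μ₀`
(the measure produced by the Ionescu–Tulcea construction), characterized through its
finite-dimensional distributions. -/
def IsMarkovPath {E : Type*} [MeasurableSpace E] (K : Kernel E E) (μ₀ : Measure E)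
    (L : Measure (ℕ → E)) : Prop :=
  IsProbabilityMeasure L ∧
    L.map (fun ω => ω 0) = μ₀ ∧
    ∀ n : ℕ,
      L.map (fun ω => fun i : Fin (n + 2) => ω (i : ℕ)) =
        (L.map (fun ω => fun i : Fin (n + 1) => ω (i : ℕ))).bind
          (fun v => (K (v (Fin.last n))).map (Fin.snoc v))

lemma exists_mem_of_hitTime_lt_top {E : Type*} {A : Set E} {ω : ℕ → E} (h : hitTime A ω < ⊤) :
    ∃ n, ω n ∈ A := by
  by_contra! hA
  simp [hitTime, hA] at h

section PathSpace

variable {E : Type*} [MeasurableSpace E]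

lemma measurable_fin_snoc_uncurry (n : ℕ) :
    Measurable fun p : (Fin (n + 1) → E) × E => (Fin.snoc p.1 p.2 : Fin (n + 2) → E) := by
  refine measurable_pi_lambda _ fun i => ?_
  cases i using Fin.lastCases with
  | last => simpa using measurable_snd
  | cast j =>
    simp only [Fin.snoc_castSucc]
    exact (measurable_pi_apply j).comp measurable_fst

lemma measurable_fin_snoc {n : ℕ} (v : Fin (n + 1) → E) :
    Measurable (Fin.snoc (α := fun _ => E) v) :=
  (measurable_fin_snoc_uncurry n).comp measurable_prodMk_left

lemma measurable_map_snoc_last (K : Kernel E E) [IsSFiniteKernel K] (n : ℕ) :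
    Measurable fun v : Fin (n + 1) → E =>
      (K (v (Fin.last n))).map (Fin.snoc (α := fun _ => E) v) := by
  refine Measure.measurable_of_measurable_coe _ fun B hB => ?_
  have hmap := fun v => Measure.map_apply (μ := K (v (Fin.last n))) (measurable_fin_snoc v) hB
  simp_rw [hmap]
  exact (K.comap _ (measurable_pi_apply (Fin.last n))).measurable_kernel_prodMk_left
    (measurable_fin_snoc_uncurry n hB)

lemma map_last_bind_snoc (K : Kernel E E) [IsSFiniteKernel K] {n : ℕ}
    (ξ : Measure (Fin (n + 1) → E)) :
    (ξ.bind fun v => (K (v (Fin.last n))).map (Fin.snoc (α := fun _ => E) v)).map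
      (fun w => w (Fin.last (n + 1))) = K ∘ₘ ξ.map (fun v => v (Fin.last n)) := by
  ext B hB
  have hlast : MeasurableSet ((fun w : Fin (n + 2) → E => w (Fin.last (n + 1))) ⁻¹' B) :=
    measurable_pi_apply _ hB
  rw [Measure.map_apply (measurable_pi_apply _) hB,
    Measure.bind_apply hlast (measurable_map_snoc_last K n).aemeasurable,
    Measure.bind_apply hB K.aemeasurable,
    lintegral_map (K.measurable_coe hB) (measurable_pi_apply _)]
  refine lintegral_congr fun v => ?_
  rw [Measure.map_apply (measurable_fin_snoc v) hlast]
  simp [Set.preimage]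

theorem IsMarkovPath.map_eval {K : Kernel E E} [IsSFiniteKernel K] {μ₀ : Measure E}
    {L : Measure (ℕ → E)} (hL : IsMarkovPath K μ₀ L) (n : ℕ) :
    L.map (fun ω => ω n) = (K ^ n) ∘ₘ μ₀ := by
  obtain ⟨-, h0, hstep⟩ := hL
  have hlast (k : ℕ) : L.map (fun ω => ω k)
      = (L.map fun ω (i : Fin (k + 1)) => ω i).map (fun v => v (Fin.last k)) := by
    have hinit : Measurable fun ω : ℕ → E => fun i : Fin (k + 1) => ω i :=
      measurable_pi_lambda _ fun i => measurable_pi_apply _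
    rw [Measure.map_map (measurable_pi_apply _) hinit]
    rfl
  induction n with
  | zero => exact h0.trans Measure.id_comp.symm
  | succ n ih =>
    rw [hlast, hstep, map_last_bind_snoc, ← hlast, ih, Measure.comp_assoc, pow_succ']
    rfl

lemma IsMarkovPath.one_le_tsum_pow_apply {K : Kernel E E} [IsSFiniteKernel K] {x : E}
    {L : Measure (ℕ → E)} (hL : IsMarkovPath K (Measure.dirac x) L) {A : Set E}
    (hA : MeasurableSet A) (hhit : L {ω | hitTime A ω < ⊤} = 1) :
    1 ≤ ∑' n, (K ^ n) x A :=
  calc 1 = L {ω | hitTime A ω < ⊤} := hhit.symm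
    _ ≤ L (⋃ n, {ω | ω n ∈ A}) :=
      measure_mono fun ω hω => Set.mem_iUnion.2 (exists_mem_of_hitTime_lt_top hω)
    _ ≤ ∑' n, L {ω | ω n ∈ A} := measure_iUnion_le _
    _ = ∑' n, (K ^ n) x A := tsum_congr fun n => by
      rw [← Measure.dirac_bind (Kernel.measurable _) x, ← hL.map_eval,
        Measure.map_apply (measurable_pi_apply n) hA]
      rfl

end PathSpace

lemma MeasureTheory.Measure.comp_mono {α β : Type*} [MeasurableSpace α] [MeasurableSpace β]
    (κ : Kernel α β) {μ ν : Measure α} (h : μ ≤ ν) : κ ∘ₘ μ ≤ κ ∘ₘ ν :=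
  Measure.le_iff.2 fun B hB => by
    rw [Measure.bind_apply hB κ.aemeasurable, Measure.bind_apply hB κ.aemeasurable]
    exact lintegral_mono' h le_rfl

lemma MeasureTheory.Measure.exists_add_eq_of_le {α : Type*} [MeasurableSpace α]
    {μ ν : Measure α} [SigmaFinite ν] (h : μ ≤ ν) : ∃ ρ, ν = μ + ρ := by
  have : SigmaFinite μ := Measure.sigmaFinite_of_le ν h
  refine ⟨ν.withDensity (1 - μ.rnDeriv ν), ?_⟩
  calc ν = ν.withDensity (μ.rnDeriv ν + (1 - μ.rnDeriv ν)) := by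
        rw [withDensity_congr_ae (g := 1), withDensity_one]
        filter_upwards [Measure.rnDeriv_le_one_of_le h] with x hx
        exact add_tsub_cancel_of_le hx
    _ = μ + ν.withDensity (1 - μ.rnDeriv ν) := by
        rw [withDensity_add_left (Measure.measurable_rnDeriv _ _),
          Measure.withDensity_rnDeriv_eq _ _ (Measure.absolutelyContinuous_of_le h)]

lemma MeasureTheory.Measure.mutuallySingular_of_eq_inf_add {α : Type*} [MeasurableSpace α]
    {μ₁ μ₂ d₁ d₂ : Measure α} [SigmaFinite (μ₁ ⊓ μ₂)]
    (h₁ : μ₁ = μ₁ ⊓ μ₂ + d₁) (h₂ : μ₂ = μ₁ ⊓ μ₂ + d₂) : d₁ ⟂ₘ d₂ := by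
  refine Measure.mutuallySingular_of_disjoint fun ξ hξ₁ hξ₂ => ?_
  have hle : μ₁ ⊓ μ₂ + ξ ≤ μ₁ ⊓ μ₂ :=
    le_inf ((add_le_add le_rfl hξ₁).trans h₁.ge) ((add_le_add le_rfl hξ₂).trans h₂.ge)
  have heq : μ₁ ⊓ μ₂ + ξ = μ₁ ⊓ μ₂ + 0 := by
    rw [add_zero]
    exact le_antisymm hle (Measure.le_add_right le_rfl)
  exact ((Measure.add_right_inj _ _ _).1 heq).le

lemma MeasureTheory.Measure.exists_measure_pos_measure_lt_top {α : Type*} [MeasurableSpace α]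
    {m : Measure α} (hm : m ≠ 0) (μ : Measure α) [SigmaFinite μ] :
    ∃ A, MeasurableSet A ∧ 0 < m A ∧ μ A < ∞ := by
  have hcover : m (⋃ n, spanningSets μ n) ≠ 0 := by
    rwa [iUnion_spanningSets, Measure.measure_univ_ne_zero]
  obtain ⟨n, hn⟩ := exists_measure_pos_of_not_measure_iUnion_null hcover
  exact ⟨_, measurableSet_spanningSets μ n, hn, measure_spanningSets_lt_top μ n⟩

namespace ProbabilityTheory.Kernel

variable {α : Type*} [MeasurableSpace α] {κ : Kernel α α} {μ μ₁ μ₂ ν ρ m : Measure α} {A : Set α}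

instance [IsMarkovKernel κ] (n : ℕ) : IsMarkovKernel (κ ^ n) := by
  induction n with
  | zero => exact inferInstanceAs (IsMarkovKernel Kernel.id)
  | succ n ih => rw [pow_succ']; exact inferInstanceAs (IsMarkovKernel (κ ∘ₖ (κ ^ n)))

lemma lintegral_tsum_pow_apply (μ : Measure α) (hA : MeasurableSet A) :
    ∫⁻ y, ∑' n, (κ ^ n) y A ∂μ = ∑' n, (⇑(κ ^ n) ∘ₘ μ) A := by
  rw [lintegral_tsum fun n => (Kernel.measurable_coe _ hA).aemeasurable]
  exact tsum_congr fun n => (Measure.bind_apply hA (Kernel.aemeasurable _)).symm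

lemma tsum_pow_apply_eq_top [IsMarkovKernel κ] (hA : MeasurableSet A)
    (h : ∀ y, 1 ≤ ∑' n, (κ ^ n) y A) (x : α) : ∑' n, (κ ^ n) x A = ∞ := by
  by_contra hfin
  have htail (k : ℕ) : 1 ≤ ∑' n, (κ ^ (n + k)) x A :=
    calc 1 = ∫⁻ _, 1 ∂(κ ^ k) x := by simp
      _ ≤ ∫⁻ y, ∑' n, (κ ^ n) y A ∂(κ ^ k) x := lintegral_mono h
      _ = ∑' n, (κ ^ (n + k)) x A := by
        rw [lintegral_tsum_pow_apply _ hA]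
        exact tsum_congr fun n => by rw [← Kernel.comp_apply, ← Kernel.pow_add]
  exact absurd (ge_of_tendsto' (ENNReal.tendsto_sum_nat_add _ hfin) htail) (by simp)

lemma invariant_iff_forall_lintegral :
    Invariant κ μ ↔ ∀ B, MeasurableSet B → μ B = ∫⁻ x, κ x B ∂μ :=
  ⟨fun h B hB => by rw [← Measure.bind_apply hB κ.aemeasurable, h.def],
    fun h => Measure.ext fun B hB => (Measure.bind_apply hB κ.aemeasurable).trans (h B hB).symm⟩

lemma Invariant.pow (hμ : Invariant κ μ) : ∀ n : ℕ, Invariant (κ ^ n) μ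
  | 0 => Measure.id_comp
  | n + 1 => by rw [pow_succ']; exact hμ.comp (hμ.pow n)

lemma Invariant.smul (hμ : Invariant κ μ) (c : ℝ≥0) : Invariant κ (c • μ) := by
  rw [Invariant, Measure.bind_smul, hμ.def]

lemma Invariant.of_add_left [SigmaFinite ν] (h : Invariant κ (ν + ρ)) (hν : Invariant κ ν) :
    Invariant κ ρ := by
  have h' := h.def
  rw [Measure.comp_add, hν.def] at h'
  exact (Measure.add_right_inj ν _ _).1 h'

lemma Invariant.absolutelyContinuous (hμ : Invariant κ μ) (hμ0 : μ ≠ 0)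
    (hG : ∀ A, MeasurableSet A → 0 < m A → ∀ y, ∑' n, (κ ^ n) y A ≠ 0) : m ≪ μ := by
  refine Measure.AbsolutelyContinuous.mk fun A hA hμA => ?_
  by_contra hmA
  have hzero : ∫⁻ y, ∑' n, (κ ^ n) y A ∂μ = 0 := by
    simp [lintegral_tsum_pow_apply μ hA, fun n => (hμ.pow n).def, hμA]
  have hae := (lintegral_eq_zero_iff (Measurable.tsum fun n =>
    Kernel.measurable_coe _ hA)).1 hzero
  have := ae_neBot.2 hμ0
  obtain ⟨y, hy⟩ := hae.exists
  exact hG A hA (pos_iff_ne_zero.2 hmA) y hy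

lemma eq_zero_of_eq_comp_add (hν : ν = κ ∘ₘ ν + ρ) (hA : MeasurableSet A) (hνA : ν A ≠ ∞)
    (hG : ∀ y, ∑' n, (κ ^ n) y A = ∞) : ρ = 0 := by
  have hiter (n : ℕ) : ν = ⇑(κ ^ n) ∘ₘ ν + ∑ k ∈ Finset.range n, ⇑(κ ^ k) ∘ₘ ρ := by
    induction n with
    | zero =>
      rw [pow_zero, Finset.sum_range_zero, add_zero]
      exact Measure.id_comp.symm
    | succ n ih =>
      calc ν = ⇑(κ ^ n) ∘ₘ (κ ∘ₘ ν + ρ) + ∑ k ∈ Finset.range n, ⇑(κ ^ k) ∘ₘ ρ := by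
            rw [← hν]; exact ih
        _ = ⇑(κ ^ (n + 1)) ∘ₘ ν + ∑ k ∈ Finset.range (n + 1), ⇑(κ ^ k) ∘ₘ ρ := by
          rw [Measure.comp_add, Measure.comp_assoc, Finset.sum_range_succ, add_assoc,
            add_comm (⇑(κ ^ n) ∘ₘ ρ), pow_succ]
          rfl
  have hle : ∑' k, (⇑(κ ^ k) ∘ₘ ρ) A ≤ ν A := ENNReal.tsum_le_of_sum_range_le fun n =>
    calc ∑ k ∈ Finset.range n, (⇑(κ ^ k) ∘ₘ ρ) A = (∑ k ∈ Finset.range n, ⇑(κ ^ k) ∘ₘ ρ) A :=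
          (Measure.finsetSum_apply _ _ _).symm
      _ ≤ (⇑(κ ^ n) ∘ₘ ν + ∑ k ∈ Finset.range n, ⇑(κ ^ k) ∘ₘ ρ) A := by
          rw [Measure.add_apply]; exact le_add_self
      _ = ν A := by rw [← hiter n]
  rw [← lintegral_tsum_pow_apply ρ hA, lintegral_congr hG, MeasureTheory.lintegral_const] at hle
  by_contra hρ
  rw [ENNReal.top_mul (Measure.measure_univ_ne_zero.2 hρ)] at hle
  exact hνA (top_le_iff.1 hle)

lemma invariant_of_comp_le [SigmaFinite ν] (hle : κ ∘ₘ ν ≤ ν) (hA : MeasurableSet A)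
    (hνA : ν A ≠ ∞) (hG : ∀ y, ∑' n, (κ ^ n) y A = ∞) : Invariant κ ν := by
  obtain ⟨ρ, hρ⟩ := Measure.exists_add_eq_of_le hle
  rw [eq_zero_of_eq_comp_add hρ hA hνA hG, add_zero] at hρ
  exact hρ.symm

theorem Invariant.eq_of_apply_eq [SigmaFinite μ₁] [SigmaFinite μ₂] (hm : m ≠ 0)
    (hG : ∀ B, MeasurableSet B → 0 < m B → ∀ y, ∑' n, (κ ^ n) y B = ∞)
    (h₁ : Invariant κ μ₁) (h₂ : Invariant κ μ₂)
    (hA : MeasurableSet A) (hmA : 0 < m A) (hA₁ : μ₁ A ≠ ∞) (hA₁₂ : μ₁ A = μ₂ A) :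
    μ₁ = μ₂ := by
  have hac (d : Measure α) (hd : Invariant κ d) (hd0 : d ≠ 0) : m ≪ d :=
    hd.absolutelyContinuous hd0 fun B hB hmB y => by simp [hG B hB hmB y]
  have : SigmaFinite (μ₁ ⊓ μ₂) := Measure.sigmaFinite_of_le μ₁ inf_le_left
  have hνA : (μ₁ ⊓ μ₂) A ≠ ∞ := ne_top_of_le_ne_top hA₁ (inf_le_left (a := μ₁) (b := μ₂) A)
  have hν : Invariant κ (μ₁ ⊓ μ₂) := invariant_of_comp_le
    (le_inf ((Measure.comp_mono κ inf_le_left).trans h₁.def.le)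
      ((Measure.comp_mono κ inf_le_right).trans h₂.def.le)) hA hνA (hG A hA hmA)
  obtain ⟨d₁, hd₁⟩ := Measure.exists_add_eq_of_le (inf_le_left (a := μ₁) (b := μ₂))
  obtain ⟨d₂, hd₂⟩ := Measure.exists_add_eq_of_le (inf_le_right (a := μ₁) (b := μ₂))
  have hd₁inv : Invariant κ d₁ := (hd₁ ▸ h₁).of_add_left hν
  have hd₂inv : Invariant κ d₂ := (hd₂ ▸ h₂).of_add_left hν
  have hdA : d₁ A = d₂ A := (ENNReal.add_right_inj hνA).1 (by
    rw [← Measure.add_apply, ← Measure.add_apply, ← hd₁, ← hd₂, hA₁₂])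
  have hzero (d : Measure α) (hd : Invariant κ d) (hdA : d A = 0) : d = 0 := by
    by_contra hd0
    exact hmA.ne' (hac d hd hd0 hdA)
  have hd : d₁ = 0 ∨ d₂ = 0 := by
    by_contra! h
    exact hm ((Measure.MutuallySingular.self_iff m).1
      ((Measure.mutuallySingular_of_eq_inf_add hd₁ hd₂).mono_ac
        (hac d₁ hd₁inv h.1) (hac d₂ hd₂inv h.2)))
  have hd₁0 : d₁ = 0 := hd.elim id fun h => hzero d₁ hd₁inv (by simp [hdA, h])
  have hd₂0 : d₂ = 0 := hzero d₂ hd₂inv (by simp [← hdA, hd₁0])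
  calc μ₁ = μ₁ ⊓ μ₂ + d₁ := hd₁
    _ = μ₁ ⊓ μ₂ + d₂ := by rw [hd₁0, hd₂0]
    _ = μ₂ := hd₂.symm

theorem Invariant.exists_eq_smul [SigmaFinite μ₁] [SigmaFinite μ₂] (hm : m ≠ 0)
    (hG : ∀ B, MeasurableSet B → 0 < m B → ∀ y, ∑' n, (κ ^ n) y B = ∞)
    (h₁ : Invariant κ μ₁) (h₂ : Invariant κ μ₂) (h₁0 : μ₁ ≠ 0) (h₂0 : μ₂ ≠ 0) :
    ∃ c : ℝ≥0, 0 < c ∧ μ₁ = c • μ₂ := by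
  obtain ⟨A, hA, hmA, hA_lt⟩ := Measure.exists_measure_pos_measure_lt_top hm (μ₁ + μ₂)
  have hpos (μ : Measure α) (hμ : Invariant κ μ) (hμ0 : μ ≠ 0) : μ A ≠ 0 := fun hμA =>
    hmA.ne' (hμ.absolutelyContinuous hμ0 (fun B hB hmB y => by simp [hG B hB hmB y]) hμA)
  have hA₁ : μ₁ A ≠ ∞ := ne_top_of_le_ne_top hA_lt.ne (Measure.le_add_right le_rfl A)
  have hA₂ : μ₂ A ≠ ∞ := ne_top_of_le_ne_top hA_lt.ne (Measure.le_add_left le_rfl A)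
  set c := (μ₁ A / μ₂ A).toNNReal
  have hc : (c : ℝ≥0∞) = μ₁ A / μ₂ A :=
    ENNReal.coe_toNNReal (ENNReal.div_ne_top hA₁ (hpos μ₂ h₂ h₂0))
  refine ⟨c, ?_, h₁.eq_of_apply_eq hm hG (h₂.smul c) hA hmA hA₁ ?_⟩
  · rw [← ENNReal.coe_pos, hc]
    exact ENNReal.div_pos (hpos μ₁ h₁ h₁0) hA₂
  · rw [Measure.smul_apply, ENNReal.smul_def, smul_eq_mul, hc,
      ENNReal.div_mul_cancel (hpos μ₂ h₂ h₂0) hA₂]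

end ProbabilityTheory.Kernel

theorem harris_uniqueness_of_stationary_measure_general
    {S : Type*} [MeasurableSpace S]
    (P : Kernel S S) [IsMarkovKernel P]
    (Pr : S → Measure (ℕ → S))
    (hPr : ∀ x : S, IsMarkovPath P (Measure.dirac x) (Pr x))
    (m : Measure S) (hm : m ≠ 0)
    (hrec : ∀ A : Set S, MeasurableSet A → 0 < m A →
      ∀ x : S, Pr x {ω | hitTime A ω < ⊤} = 1) :
    ∀ μ₁ μ₂ : Measure S, SigmaFinite μ₁ → SigmaFinite μ₂ → μ₁ ≠ 0 → μ₂ ≠ 0 →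
      (∀ B : Set S, MeasurableSet B → μ₁ B = ∫⁻ x, P x B ∂μ₁) →
      (∀ B : Set S, MeasurableSet B → μ₂ B = ∫⁻ x, P x B ∂μ₂) →
      ∃ c : ℝ≥0, 0 < c ∧ μ₁ = c • μ₂ := by
  intro μ₁ μ₂ _ _ h₁0 h₂0 hs₁ hs₂
  have hG (A : Set S) (hA : MeasurableSet A) (hmA : 0 < m A) (x : S) :
      ∑' n, (P ^ n) x A = ∞ :=
    Kernel.tsum_pow_apply_eq_top hA (fun y => (hPr y).one_le_tsum_pow_apply hA (hrec A hA hmA y)) x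
  exact (Kernel.invariant_iff_forall_lintegral.2 hs₁).exists_eq_smul hm hG
    (Kernel.invariant_iff_forall_lintegral.2 hs₂) h₁0 h₂0

/-- **Harris (1956), uniqueness.** If the Markov chain with transition kernel `P` is
`m`-recurrent for a nonzero σ-finite measure `m`, then the stationary measure is unique up
to a positive constant multiplier. -/
theorem harris_uniqueness_of_stationary_measure
    {S : Type*} [MeasurableSpace S] [MeasurableSpace.CountablyGenerated S]
    (P : Kernel S S) [IsMarkovKernel P]
    (Pr : S → Measure (ℕ → S))
    (hPr : ∀ x : S, IsMarkovPath P (Measure.dirac x) (Pr x))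
    (m : Measure S) [SigmaFinite m] (hm : m ≠ 0)
    (hrec : ∀ A : Set S, MeasurableSet A → 0 < m A →
      ∀ x : S, Pr x {ω | hitTime A ω < ⊤} = 1) :
    ∀ μ₁ μ₂ : Measure S, SigmaFinite μ₁ → SigmaFinite μ₂ → μ₁ ≠ 0 → μ₂ ≠ 0 →
      (∀ B : Set S, MeasurableSet B → μ₁ B = ∫⁻ x, P x B ∂μ₁) →
      (∀ B : Set S, MeasurableSet B → μ₂ B = ∫⁻ x, P x B ∂μ₂) →
      ∃ c : ℝ≥0, 0 < c ∧ μ₁ = c • μ₂ :=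
  harris_uniqueness_of_stationary_measure_general P Pr hPr m hm hrec
end
end

section
/- Let Q be a Markov kernel on a measurable space (E,𝓔) whose σ-algebra is countably generated and separates points (so the diagonal {(z,z) : z ∈ E} is measurable in E × E), and suppose there exist β ∈ (0,1] and a probability measure ν with Q(x,·) ≥ β ν for all x ∈ E. Then there exists a Markov kernel Q̂ on E × E such that for all (x,y) ∈ E × E: the first marginal of Q̂((x,y),·) is Q(x,·), the second marginal is Q(y,·), and Q̂((x,y), {(z,z') : z = z'}) ≥ β. -/
open MeasureTheory ProbabilityTheory
open scoped ENNReal NNReal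

noncomputable section

/-!
Split `Q x = β • ν + R x`, where the residual `R x` has mass `1 - β`. Starting from `(x, y)`,
run `β • ν` along the diagonal and the product `R x ⊗ R y`, rescaled by `(1 - β)⁻¹`, off it:
each marginal is `β • ν + R x` resp. `β • ν + R y`, and the diagonal gets mass at least `β`.
When `β = 1` the residual vanishes, so the factor `(1 - β)⁻¹ = ⊤` does no harm.
-/

open Set

namespace MeasureTheory.Measure

variable {α : Type*} [MeasurableSpace α]

lemma inv_smul_smul_of_measure_univ_eq {μ : Measure α} [IsFiniteMeasure μ] {c : ℝ≥0∞}
    (hμ : μ univ = c) : c⁻¹ • c • μ = μ := by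
  rcases eq_zero_or_neZero μ with rfl | _
  · simp
  rw [smul_smul, ← hμ, ENNReal.inv_mul_cancel (NeZero.ne _) (measure_ne_top _ _), one_smul]

end MeasureTheory.Measure

namespace ProbabilityTheory.Kernel

variable {α β : Type*} [MeasurableSpace α] [MeasurableSpace β]

def residual (κ : Kernel α β) (μ : Measure β) [IsFiniteMeasure μ] (h : ∀ a, μ ≤ κ a) :
    Kernel α β where
  toFun a := κ a - μ
  measurable' := by
    refine Measure.measurable_of_measurable_coe _ fun s hs => ?_
    simp_rw [Measure.sub_apply hs (h _)]
    exact (κ.measurable_coe hs).sub measurable_const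

variable {κ : Kernel α β} {μ : Measure β} [IsFiniteMeasure μ] {h : ∀ a, μ ≤ κ a}

lemma residual_add (a : α) : κ.residual μ h a + μ = κ a :=
  Measure.sub_add_cancel_of_le (h a)

lemma residual_apply_univ (a : α) : κ.residual μ h a univ = κ a univ - μ univ :=
  Measure.sub_apply .univ (h a)

lemma residual_le : κ.residual μ h ≤ κ := fun _ => Measure.sub_le

instance [IsFiniteKernel κ] : IsFiniteKernel (κ.residual μ h) :=
  isFiniteKernel_of_le residual_le

/-- Meant for `R₁ a univ = R₂ b univ = c`: the factor `c⁻¹` brings the mass `c²` of the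
product back to `c`. -/
def overlapCoupling (ρ : Measure β) (R₁ R₂ : Kernel α β) [IsSFiniteKernel R₁]
    [IsSFiniteKernel R₂] (c : ℝ≥0∞) : Kernel (α × α) (β × β) where
  toFun p := ρ.map Function.diag + c⁻¹ • (R₁ p.1).prod (R₂ p.2)
  measurable' := by
    refine Measure.measurable_of_measurable_coe _ fun s hs => ?_
    have hprod :=
      (R₁.comap Prod.fst measurable_fst ×ₖ R₂.comap Prod.snd measurable_snd).measurable_coe hs
    simp only [prod_apply, comap_apply] at hprod
    simp only [Measure.add_apply, Measure.smul_apply, smul_eq_mul]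
    exact measurable_const.add (hprod.const_mul _)

variable {ρ : Measure β} {R₁ R₂ : Kernel α β} [IsFiniteKernel R₁] [IsFiniteKernel R₂]
  {c : ℝ≥0∞}

lemma overlapCoupling_apply (a b : α) :
    overlapCoupling ρ R₁ R₂ c (a, b) = ρ.map Function.diag + c⁻¹ • (R₁ a).prod (R₂ b) :=
  rfl

lemma map_fst_overlapCoupling (h₁ : ∀ a, R₁ a univ = c) (h₂ : ∀ a, R₂ a univ = c) (a b : α) :
    (overlapCoupling ρ R₁ R₂ c (a, b)).map Prod.fst = ρ + R₁ a := by
  rw [overlapCoupling_apply, Measure.map_add _ _ measurable_fst,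
    Measure.map_map measurable_fst measurable_diag, Measure.map_smul, Measure.map_fst_prod, h₂,
    Measure.inv_smul_smul_of_measure_univ_eq (h₁ a)]
  exact congrArg (· + R₁ a) Measure.map_id

lemma map_snd_overlapCoupling (h₁ : ∀ a, R₁ a univ = c) (h₂ : ∀ a, R₂ a univ = c) (a b : α) :
    (overlapCoupling ρ R₁ R₂ c (a, b)).map Prod.snd = ρ + R₂ b := by
  rw [overlapCoupling_apply, Measure.map_add _ _ measurable_snd,
    Measure.map_map measurable_snd measurable_diag, Measure.map_smul, Measure.map_snd_prod, h₁,
    Measure.inv_smul_smul_of_measure_univ_eq (h₂ b)]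
  exact congrArg (· + R₂ b) Measure.map_id

lemma measure_univ_le_overlapCoupling_diagonal (p : α × α) :
    ρ univ ≤ overlapCoupling ρ R₁ R₂ c p {q | q.1 = q.2} :=
  calc ρ univ = ρ (Function.diag ⁻¹' {q : β × β | q.1 = q.2}) := by simp
    _ ≤ ρ.map Function.diag {q | q.1 = q.2} := Measure.le_map_apply measurable_diag.aemeasurable _
    _ ≤ _ := le_self_add

end ProbabilityTheory.Kernel

theorem exists_coupling_kernel_of_minorization_general
    {E : Type*} [MeasurableSpace E]
    (Q : Kernel E E) [IsMarkovKernel Q]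
    (β : ℝ≥0∞) (hβ1 : β ≤ 1)
    (ν : Measure E) [IsProbabilityMeasure ν]
    (hmin : ∀ x : E, β • ν ≤ Q x) :
    ∃ Qhat : Kernel (E × E) (E × E), IsMarkovKernel Qhat ∧
      ∀ x y : E,
        (Qhat (x, y)).map Prod.fst = Q x ∧
        (Qhat (x, y)).map Prod.snd = Q y ∧
        β ≤ Qhat (x, y) {q : E × E | q.1 = q.2} := by
  have : IsFiniteMeasure (β • ν) := ⟨by simpa using hβ1.trans_lt ENNReal.one_lt_top⟩
  set R := Q.residual (β • ν) hmin
  have hR : ∀ x, R x univ = 1 - β := fun x => by simp [R, Kernel.residual_apply_univ]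
  have hQ : ∀ x, β • ν + R x = Q x := fun x => (add_comm _ _).trans (Kernel.residual_add x)
  set Qhat := Kernel.overlapCoupling (β • ν) R R (1 - β)
  have hfst : ∀ x y, (Qhat (x, y)).map Prod.fst = Q x := fun x y =>
    (Kernel.map_fst_overlapCoupling hR hR x y).trans (hQ x)
  have hsnd : ∀ x y, (Qhat (x, y)).map Prod.snd = Q y := fun x y =>
    (Kernel.map_snd_overlapCoupling hR hR x y).trans (hQ y)
  have hMarkov : IsMarkovKernel Qhat := ⟨fun ⟨x, y⟩ =>
    have : IsProbabilityMeasure ((Qhat (x, y)).map Prod.fst) := by rw [hfst]; infer_instance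
    Measure.isProbabilityMeasure_of_map Prod.fst⟩
  refine ⟨Qhat, hMarkov, fun x y => ⟨hfst x y, hsnd x y, ?_⟩⟩
  simpa using Kernel.measure_univ_le_overlapCoupling_diagonal (ρ := β • ν) (x, y)

/-- **Coupling from a Doeblin minorization.** If `Q (x, ·) ≥ β ν` for all `x`, then there
is a Markov kernel `Q̂` on `E × E` coupling `Q` with itself such that
`Q̂ ((x,y), {(z,z') : z = z'}) ≥ β` for all `(x, y)`. -/
theorem exists_coupling_kernel_of_minorization
    {E : Type*} [MeasurableSpace E] [MeasurableSpace.CountablyGenerated E]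
    (hdiag : MeasurableSet {q : E × E | q.1 = q.2})
    (Q : Kernel E E) [IsMarkovKernel Q]
    (β : ℝ≥0∞) (hβ0 : 0 < β) (hβ1 : β ≤ 1)
    (ν : Measure E) [IsProbabilityMeasure ν]
    (hmin : ∀ x : E, β • ν ≤ Q x) :
    ∃ Qhat : Kernel (E × E) (E × E), IsMarkovKernel Qhat ∧
      ∀ x y : E,
        (Qhat (x, y)).map Prod.fst = Q x ∧
        (Qhat (x, y)).map Prod.snd = Q y ∧
        β ≤ Qhat (x, y) {q : E × E | q.1 = q.2} :=
  exists_coupling_kernel_of_minorization_general Q β hβ1 ν hmin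
end
end
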